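/- arXiv:1307.2639 — 4 statements merged into one kernel-verified Lean document; each statement's English description precedes it below -/
import Mathlib

section
/- Let u : ℝ³ → ℝ be smooth with variables x, y, z. Define L = (1/2)u_x u_y − cos u, M = (1/2)u_x u_z − (1/8)u_x⁴ + (1/2)u_xx², N = (1/2)u_y u_z − (1/2)u_x² cos u − u_xx(u_xy − sin u). Then the identity D_z L − D_y M − D_x N = −(u_z − (1/2)u_x³ − u_xxx)·(u_xy − sin u) holds for all smooth u, where D_x, D_y, D_z denote partial derivatives in x, y, z. -/
/-- Total derivative with respect to the first variable `x`. -/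
noncomputable def Dx (f : ℝ → ℝ → ℝ → ℝ) : ℝ → ℝ → ℝ → ℝ :=
  fun x y z => deriv (fun s => f s y z) x

/-- Total derivative with respect to the second variable `y`. -/
noncomputable def Dy (f : ℝ → ℝ → ℝ → ℝ) : ℝ → ℝ → ℝ → ℝ :=
  fun x y z => deriv (fun t => f x t z) y

/-- Total derivative with respect to the third variable `z`. -/
noncomputable def Dz (f : ℝ → ℝ → ℝ → ℝ) : ℝ → ℝ → ℝ → ℝ :=
  fun x y z => deriv (fun t => f x y t) z

namespace Stmt3Aux

/-- Uncurried version. -/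
def unc (f : ℝ → ℝ → ℝ → ℝ) : ℝ × ℝ × ℝ → ℝ := fun p => f p.1 p.2.1 p.2.2

lemma slice_x (f : ℝ → ℝ → ℝ → ℝ) (hf : ContDiff ℝ (⊤ : ℕ∞) (unc f)) (x y z : ℝ) :
    HasDerivAt (fun s => f s y z) (Dx f x y z) x := by
  have hd : DifferentiableAt ℝ (fun s => f s y z) x := by
    have h1 : Differentiable ℝ (unc f) := hf.differentiable (by simp)
    have h2 : Differentiable ℝ (fun s : ℝ => (s, y, z)) :=
      differentiable_id.prodMk (differentiable_const _)
    exact (h1.comp h2).differentiableAt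
  exact hd.hasDerivAt

lemma slice_y (f : ℝ → ℝ → ℝ → ℝ) (hf : ContDiff ℝ (⊤ : ℕ∞) (unc f)) (x y z : ℝ) :
    HasDerivAt (fun t => f x t z) (Dy f x y z) y := by
  have hd : DifferentiableAt ℝ (fun t => f x t z) y := by
    have h1 : Differentiable ℝ (unc f) := hf.differentiable (by simp)
    have h2 : Differentiable ℝ (fun t : ℝ => ((x : ℝ), t, z)) :=
      (differentiable_const _).prodMk (differentiable_id.prodMk (differentiable_const _))
    exact (h1.comp h2).differentiableAt
  exact hd.hasDerivAt

lemma slice_z (f : ℝ → ℝ → ℝ → ℝ) (hf : ContDiff ℝ (⊤ : ℕ∞) (unc f)) (x y z : ℝ) :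
    HasDerivAt (fun t => f x y t) (Dz f x y z) z := by
  have hd : DifferentiableAt ℝ (fun t => f x y t) z := by
    have h1 : Differentiable ℝ (unc f) := hf.differentiable (by simp)
    have h2 : Differentiable ℝ (fun t : ℝ => ((x : ℝ), y, t)) :=
      (differentiable_const _).prodMk ((differentiable_const _).prodMk differentiable_id)
    exact (h1.comp h2).differentiableAt
  exact hd.hasDerivAt

lemma Dx_eq (f : ℝ → ℝ → ℝ → ℝ) (hf : ContDiff ℝ (⊤ : ℕ∞) (unc f)) (x y z : ℝ) :
    Dx f x y z = fderiv ℝ (unc f) (x, y, z) (1, 0, 0) := by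
  have hline : HasDerivAt (fun s : ℝ => ((s : ℝ), y, z)) ((1 : ℝ), (0 : ℝ), (0 : ℝ)) x :=
    (hasDerivAt_id x).prodMk (hasDerivAt_const x (y, z))
  have hF : HasFDerivAt (unc f) (fderiv ℝ (unc f) (x, y, z)) (x, y, z) :=
    (hf.differentiable (by simp) (x, y, z)).hasFDerivAt
  exact (hF.comp_hasDerivAt x hline).deriv

lemma Dy_eq (f : ℝ → ℝ → ℝ → ℝ) (hf : ContDiff ℝ (⊤ : ℕ∞) (unc f)) (x y z : ℝ) :
    Dy f x y z = fderiv ℝ (unc f) (x, y, z) (0, 1, 0) := by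
  have hline : HasDerivAt (fun t : ℝ => ((x : ℝ), t, z)) ((0 : ℝ), (1 : ℝ), (0 : ℝ)) y :=
    (hasDerivAt_const y x).prodMk ((hasDerivAt_id y).prodMk (hasDerivAt_const y z))
  have hF : HasFDerivAt (unc f) (fderiv ℝ (unc f) (x, y, z)) (x, y, z) :=
    (hf.differentiable (by simp) (x, y, z)).hasFDerivAt
  exact (hF.comp_hasDerivAt y hline).deriv

lemma Dz_eq (f : ℝ → ℝ → ℝ → ℝ) (hf : ContDiff ℝ (⊤ : ℕ∞) (unc f)) (x y z : ℝ) :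
    Dz f x y z = fderiv ℝ (unc f) (x, y, z) (0, 0, 1) := by
  have hline : HasDerivAt (fun t : ℝ => ((x : ℝ), y, t)) ((0 : ℝ), (0 : ℝ), (1 : ℝ)) z :=
    (hasDerivAt_const z x).prodMk ((hasDerivAt_const z y).prodMk (hasDerivAt_id z))
  have hF : HasFDerivAt (unc f) (fderiv ℝ (unc f) (x, y, z)) (x, y, z) :=
    (hf.differentiable (by simp) (x, y, z)).hasFDerivAt
  exact (hF.comp_hasDerivAt z hline).deriv

lemma smooth_pd (F : ℝ × ℝ × ℝ → ℝ) (hf : ContDiff ℝ (⊤ : ℕ∞) F) (v : ℝ × ℝ × ℝ) :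
    ContDiff ℝ (⊤ : ℕ∞) (fun p => fderiv ℝ F p v) :=
  (hf.fderiv_right (by simp)).clm_apply contDiff_const

lemma smooth_Dx (f : ℝ → ℝ → ℝ → ℝ) (hf : ContDiff ℝ (⊤ : ℕ∞) (unc f)) :
    ContDiff ℝ (⊤ : ℕ∞) (unc (Dx f)) := by
  have h : unc (Dx f) = fun p => fderiv ℝ (unc f) p (1, 0, 0) :=
    funext fun p => Dx_eq f hf p.1 p.2.1 p.2.2
  rw [h]; exact smooth_pd _ hf _

lemma smooth_Dy (f : ℝ → ℝ → ℝ → ℝ) (hf : ContDiff ℝ (⊤ : ℕ∞) (unc f)) :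
    ContDiff ℝ (⊤ : ℕ∞) (unc (Dy f)) := by
  have h : unc (Dy f) = fun p => fderiv ℝ (unc f) p (0, 1, 0) :=
    funext fun p => Dy_eq f hf p.1 p.2.1 p.2.2
  rw [h]; exact smooth_pd _ hf _

lemma smooth_Dz (f : ℝ → ℝ → ℝ → ℝ) (hf : ContDiff ℝ (⊤ : ℕ∞) (unc f)) :
    ContDiff ℝ (⊤ : ℕ∞) (unc (Dz f)) := by
  have h : unc (Dz f) = fun p => fderiv ℝ (unc f) p (0, 0, 1) :=
    funext fun p => Dz_eq f hf p.1 p.2.1 p.2.2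
  rw [h]; exact smooth_pd _ hf _

lemma fderiv_comm (F : ℝ × ℝ × ℝ → ℝ) (hf : ContDiff ℝ (⊤ : ℕ∞) F) (p v w : ℝ × ℝ × ℝ) :
    fderiv ℝ (fun q => fderiv ℝ F q v) p w = fderiv ℝ (fun q => fderiv ℝ F q w) p v := by
  have hF' : ∀ q, HasFDerivAt F (fderiv ℝ F q) q :=
    fun q => (hf.differentiable (by simp) q).hasFDerivAt
  have hd2 : HasFDerivAt (fderiv ℝ F) (fderiv ℝ (fderiv ℝ F) p) p :=
    (((hf.fderiv_right (m := (⊤ : ℕ∞)) (by simp)).differentiable (by simp)) p).hasFDerivAt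
  have hsym := second_derivative_symmetric hF' hd2 v w
  have ev : ∀ a : ℝ × ℝ × ℝ, fderiv ℝ (fun q => fderiv ℝ F q a) p =
      (ContinuousLinearMap.apply ℝ ℝ a).comp (fderiv ℝ (fderiv ℝ F) p) := by
    intro a
    exact (((ContinuousLinearMap.apply ℝ ℝ a).hasFDerivAt).comp p hd2).fderiv
  rw [ev v, ev w]
  simpa using hsym.symm

/-- Mixed partial commutation `Dy (Dx f) = Dx (Dy f)` for smooth `f`. -/
lemma comm_xy (f : ℝ → ℝ → ℝ → ℝ) (hf : ContDiff ℝ (⊤ : ℕ∞) (unc f)) (x y z : ℝ) :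
    Dy (Dx f) x y z = Dx (Dy f) x y z := by
  have h1 : Dy (Dx f) x y z = fderiv ℝ (fun q => fderiv ℝ (unc f) q (1, 0, 0)) (x, y, z) (0, 1, 0) :=
    Dy_eq (Dx f) (smooth_Dx f hf) x y z |>.trans (by
      congr 2
      exact funext fun (p : ℝ × ℝ × ℝ) => Dx_eq f hf p.1 p.2.1 p.2.2)
  have h2 : Dx (Dy f) x y z = fderiv ℝ (fun q => fderiv ℝ (unc f) q (0, 1, 0)) (x, y, z) (1, 0, 0) :=
    Dx_eq (Dy f) (smooth_Dy f hf) x y z |>.trans (by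
      congr 2
      exact funext fun (p : ℝ × ℝ × ℝ) => Dy_eq f hf p.1 p.2.1 p.2.2)
  rw [h1, h2, fderiv_comm (unc f) hf]

lemma comm_xz (f : ℝ → ℝ → ℝ → ℝ) (hf : ContDiff ℝ (⊤ : ℕ∞) (unc f)) (x y z : ℝ) :
    Dz (Dx f) x y z = Dx (Dz f) x y z := by
  have h1 : Dz (Dx f) x y z = fderiv ℝ (fun q => fderiv ℝ (unc f) q (1, 0, 0)) (x, y, z) (0, 0, 1) :=
    Dz_eq (Dx f) (smooth_Dx f hf) x y z |>.trans (by
      congr 2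
      exact funext fun (p : ℝ × ℝ × ℝ) => Dx_eq f hf p.1 p.2.1 p.2.2)
  have h2 : Dx (Dz f) x y z = fderiv ℝ (fun q => fderiv ℝ (unc f) q (0, 0, 1)) (x, y, z) (1, 0, 0) :=
    Dx_eq (Dz f) (smooth_Dz f hf) x y z |>.trans (by
      congr 2
      exact funext fun (p : ℝ × ℝ × ℝ) => Dz_eq f hf p.1 p.2.1 p.2.2)
  rw [h1, h2, fderiv_comm (unc f) hf]

lemma comm_yz (f : ℝ → ℝ → ℝ → ℝ) (hf : ContDiff ℝ (⊤ : ℕ∞) (unc f)) (x y z : ℝ) :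
    Dz (Dy f) x y z = Dy (Dz f) x y z := by
  have h1 : Dz (Dy f) x y z = fderiv ℝ (fun q => fderiv ℝ (unc f) q (0, 1, 0)) (x, y, z) (0, 0, 1) :=
    Dz_eq (Dy f) (smooth_Dy f hf) x y z |>.trans (by
      congr 2
      exact funext fun (p : ℝ × ℝ × ℝ) => Dy_eq f hf p.1 p.2.1 p.2.2)
  have h2 : Dy (Dz f) x y z = fderiv ℝ (fun q => fderiv ℝ (unc f) q (0, 0, 1)) (x, y, z) (0, 1, 0) :=
    Dy_eq (Dz f) (smooth_Dz f hf) x y z |>.trans (by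
      congr 2
      exact funext fun (p : ℝ × ℝ × ℝ) => Dz_eq f hf p.1 p.2.1 p.2.2)
  rw [h1, h2, fderiv_comm (unc f) hf]

end Stmt3Aux

open Stmt3Aux in
/-- Equation (17) of the paper: for all smooth `u(x,y,z)`,
`D_z L - D_y M - D_x N = -(u_z - (1/2)u_x³ - u_xxx)(u_xy - sin u)`. -/
theorem stmt_3 (u : ℝ → ℝ → ℝ → ℝ)
    (hu : ContDiff ℝ (⊤ : ℕ∞) fun p : ℝ × ℝ × ℝ => u p.1 p.2.1 p.2.2)
    (L M N : ℝ → ℝ → ℝ → ℝ)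
    (hL : ∀ x y z, L x y z = (1/2) * Dx u x y z * Dy u x y z - Real.cos (u x y z))
    (hM : ∀ x y z, M x y z = (1/2) * Dx u x y z * Dz u x y z
          - (1/8) * (Dx u x y z)^4 + (1/2) * (Dx (Dx u) x y z)^2)
    (hN : ∀ x y z, N x y z = (1/2) * Dy u x y z * Dz u x y z
          - (1/2) * (Dx u x y z)^2 * Real.cos (u x y z)
          - Dx (Dx u) x y z * (Dy (Dx u) x y z - Real.sin (u x y z))) :
    ∀ x y z, Dz L x y z - Dy M x y z - Dx N x y z
      = -(Dz u x y z - (1/2) * (Dx u x y z)^3 - Dx (Dx (Dx u)) x y z)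
          * (Dy (Dx u) x y z - Real.sin (u x y z)) := by
  have hu' : ContDiff ℝ (⊤ : ℕ∞) (unc u) := hu
  have hux : ContDiff ℝ (⊤ : ℕ∞) (unc (Dx u)) := smooth_Dx u hu'
  have huy : ContDiff ℝ (⊤ : ℕ∞) (unc (Dy u)) := smooth_Dy u hu'
  have huz : ContDiff ℝ (⊤ : ℕ∞) (unc (Dz u)) := smooth_Dz u hu'
  have huxx : ContDiff ℝ (⊤ : ℕ∞) (unc (Dx (Dx u))) := smooth_Dx _ hux
  have huxy : ContDiff ℝ (⊤ : ℕ∞) (unc (Dy (Dx u))) := smooth_Dy _ hux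
  intro x y z
  -- z-direction derivatives
  have h_u_z := slice_z u hu' x y z
  have h_ux_z := slice_z _ hux x y z
  have h_uy_z := slice_z _ huy x y z
  -- y-direction derivatives
  have h_u_y := slice_y u hu' x y z
  have h_ux_y := slice_y _ hux x y z
  have h_uz_y := slice_y _ huz x y z
  have h_uxx_y := slice_y _ huxx x y z
  -- x-direction derivatives
  have h_u_x := slice_x u hu' x y z
  have h_ux_x := slice_x _ hux x y z
  have h_uxx_x := slice_x _ huxx x y z
  have h_uy_x := slice_x _ huy x y z
  have h_uz_x := slice_x _ huz x y z
  have h_uxy_x := slice_x _ huxy x y z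
  -- compute Dz L
  have hLz : Dz L x y z =
      (1/2) * Dz (Dx u) x y z * Dy u x y z + (1/2) * Dx u x y z * Dz (Dy u) x y z
      - (-Real.sin (u x y z) * Dz u x y z) := by
    have hd : HasDerivAt (fun t => (1/2) * Dx u x y t * Dy u x y t - Real.cos (u x y t))
        ((1/2) * Dz (Dx u) x y z * Dy u x y z + (1/2) * Dx u x y z * Dz (Dy u) x y z
          - (-Real.sin (u x y z) * Dz u x y z)) z :=
      ((h_ux_z.const_mul (1/2 : ℝ)).mul h_uy_z).sub h_u_z.cos
    have heq : (fun t => L x y t)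
        = fun t => (1/2) * Dx u x y t * Dy u x y t - Real.cos (u x y t) :=
      funext fun t => hL x y t
    show deriv (fun t => L x y t) z = _
    rw [heq]; exact hd.deriv
  -- compute Dy M
  have hMy : Dy M x y z =
      ((1/2) * Dy (Dx u) x y z * Dz u x y z + (1/2) * Dx u x y z * Dy (Dz u) x y z
      - (1/8) * ((4:ℕ) * Dx u x y z ^ 3 * Dy (Dx u) x y z))
      + (1/2) * ((2:ℕ) * Dx (Dx u) x y z ^ 1 * Dy (Dx (Dx u)) x y z) := by
    have hd : HasDerivAt (fun t => (1/2) * Dx u x t z * Dz u x t z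
        - (1/8) * (Dx u x t z)^4 + (1/2) * (Dx (Dx u) x t z)^2)
        (((1/2) * Dy (Dx u) x y z * Dz u x y z + (1/2) * Dx u x y z * Dy (Dz u) x y z
          - (1/8) * ((4:ℕ) * Dx u x y z ^ 3 * Dy (Dx u) x y z))
          + (1/2) * ((2:ℕ) * Dx (Dx u) x y z ^ 1 * Dy (Dx (Dx u)) x y z)) y :=
      ((((h_ux_y.const_mul (1/2 : ℝ)).mul h_uz_y).sub
        ((h_ux_y.pow 4).const_mul (1/8 : ℝ))).add ((h_uxx_y.pow 2).const_mul (1/2 : ℝ)))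
    have heq : (fun t => M x t z) = fun t => (1/2) * Dx u x t z * Dz u x t z
        - (1/8) * (Dx u x t z)^4 + (1/2) * (Dx (Dx u) x t z)^2 :=
      funext fun t => hM x t z
    show deriv (fun t => M x t z) y = _
    rw [heq]; exact hd.deriv
  -- compute Dx N
  have hNx : Dx N x y z =
      ((1/2) * Dx (Dy u) x y z * Dz u x y z + (1/2) * Dy u x y z * Dx (Dz u) x y z
      - ((1/2) * ((2:ℕ) * Dx u x y z ^ 1 * Dx (Dx u) x y z) * Real.cos (u x y z)
          + (1/2) * (Dx u x y z)^2 * (-Real.sin (u x y z) * Dx u x y z)))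
      - (Dx (Dx (Dx u)) x y z * (Dy (Dx u) x y z - Real.sin (u x y z))
          + Dx (Dx u) x y z * (Dx (Dy (Dx u)) x y z - Real.cos (u x y z) * Dx u x y z)) := by
    have hd : HasDerivAt (fun s => (1/2) * Dy u s y z * Dz u s y z
        - (1/2) * (Dx u s y z)^2 * Real.cos (u s y z)
        - Dx (Dx u) s y z * (Dy (Dx u) s y z - Real.sin (u s y z)))
        (((1/2) * Dx (Dy u) x y z * Dz u x y z + (1/2) * Dy u x y z * Dx (Dz u) x y z
          - ((1/2) * ((2:ℕ) * Dx u x y z ^ 1 * Dx (Dx u) x y z) * Real.cos (u x y z)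
            + (1/2) * (Dx u x y z)^2 * (-Real.sin (u x y z) * Dx u x y z)))
          - (Dx (Dx (Dx u)) x y z * (Dy (Dx u) x y z - Real.sin (u x y z))
            + Dx (Dx u) x y z * (Dx (Dy (Dx u)) x y z - Real.cos (u x y z) * Dx u x y z))) x :=
      (((h_uy_x.const_mul (1/2 : ℝ)).mul h_uz_x).sub
        (((h_ux_x.pow 2).const_mul (1/2 : ℝ)).mul h_u_x.cos)).sub
        (h_uxx_x.mul (h_uxy_x.sub h_u_x.sin))
    have heq : (fun s => N s y z) = fun s => (1/2) * Dy u s y z * Dz u s y z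
        - (1/2) * (Dx u s y z)^2 * Real.cos (u s y z)
        - Dx (Dx u) s y z * (Dy (Dx u) s y z - Real.sin (u s y z)) :=
      funext fun s => hN s y z
    show deriv (fun s => N s y z) x = _
    rw [heq]; exact hd.deriv
  rw [hLz, hMy, hNx, comm_xz u hu' x y z, comm_yz u hu' x y z, comm_xy u hu' x y z,
    comm_xy (Dx u) hux x y z]
  push_cast
  ring
end

section
/- Let u : ℝ³ → ℝ be smooth with variables x, y, z. Define L = (1/2)u_x u_y − cos u, M = (1/2)u_x u_z − (1/8)u_x⁴ + (1/2)u_xx², N = (1/2)u_y u_z − (1/2)u_x² cos u − u_xx(u_xy − sin u). If u satisfies both the sine-Gordon equation u_xy = sin u and the modified KdV equation u_z = u_xxx + (1/2)u_x³, then the 2-form ℒ = L dx∧dy − M dz∧dx − N dy∧dz is closed, i.e., ∂_z L − ∂_y M − ∂_x N = 0. -/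
namespace SGAux

def Sm (f : ℝ → ℝ → ℝ → ℝ) : Prop := ContDiff ℝ (⊤ : ℕ∞) fun p : ℝ × ℝ × ℝ => f p.1 p.2.1 p.2.2

def e1 : ℝ × ℝ × ℝ := (1, 0, 0)
def e2 : ℝ × ℝ × ℝ := (0, 1, 0)
def e3 : ℝ × ℝ × ℝ := (0, 0, 1)

variable {f : ℝ → ℝ → ℝ → ℝ}

noncomputable def F (f : ℝ → ℝ → ℝ → ℝ) : ℝ × ℝ × ℝ → ℝ := fun p => f p.1 p.2.1 p.2.2

theorem hasDerivAt_x' (hf : Sm f) (x y z : ℝ) :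
    HasDerivAt (fun s => f s y z) (fderiv ℝ (F f) (x, y, z) e1) x := by
  have h1 : HasDerivAt (fun s : ℝ => (s, y, z) : ℝ → ℝ × ℝ × ℝ) e1 x :=
    (hasDerivAt_id x).prodMk ((hasDerivAt_const x y).prodMk (hasDerivAt_const x z))
  exact ((hf.differentiable (by simp) (x, y, z)).hasFDerivAt).comp_hasDerivAt x h1

theorem hasDerivAt_y' (hf : Sm f) (x y z : ℝ) :
    HasDerivAt (fun t => f x t z) (fderiv ℝ (F f) (x, y, z) e2) y := by
  have h1 : HasDerivAt (fun t : ℝ => (x, t, z) : ℝ → ℝ × ℝ × ℝ) e2 y :=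
    (hasDerivAt_const y x).prodMk ((hasDerivAt_id y).prodMk (hasDerivAt_const y z))
  exact ((hf.differentiable (by simp) (x, y, z)).hasFDerivAt).comp_hasDerivAt y h1

theorem hasDerivAt_z' (hf : Sm f) (x y z : ℝ) :
    HasDerivAt (fun t => f x y t) (fderiv ℝ (F f) (x, y, z) e3) z := by
  have h1 : HasDerivAt (fun t : ℝ => (x, y, t) : ℝ → ℝ × ℝ × ℝ) e3 z :=
    (hasDerivAt_const z x).prodMk ((hasDerivAt_const z y).prodMk (hasDerivAt_id z))
  exact ((hf.differentiable (by simp) (x, y, z)).hasFDerivAt).comp_hasDerivAt z h1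

theorem Dx_eq (hf : Sm f) (x y z : ℝ) : Dx f x y z = fderiv ℝ (F f) (x, y, z) e1 :=
  (hasDerivAt_x' hf x y z).deriv
theorem Dy_eq (hf : Sm f) (x y z : ℝ) : Dy f x y z = fderiv ℝ (F f) (x, y, z) e2 :=
  (hasDerivAt_y' hf x y z).deriv
theorem Dz_eq (hf : Sm f) (x y z : ℝ) : Dz f x y z = fderiv ℝ (F f) (x, y, z) e3 :=
  (hasDerivAt_z' hf x y z).deriv

theorem hx (hf : Sm f) (x y z : ℝ) : HasDerivAt (fun s => f s y z) (Dx f x y z) x := by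
  rw [Dx_eq hf]; exact hasDerivAt_x' hf x y z
theorem hy (hf : Sm f) (x y z : ℝ) : HasDerivAt (fun t => f x t z) (Dy f x y z) y := by
  rw [Dy_eq hf]; exact hasDerivAt_y' hf x y z
theorem hz (hf : Sm f) (x y z : ℝ) : HasDerivAt (fun t => f x y t) (Dz f x y z) z := by
  rw [Dz_eq hf]; exact hasDerivAt_z' hf x y z

theorem Sm_apply_fderiv (hf : Sm f) (v : ℝ × ℝ × ℝ) :
    ContDiff ℝ (⊤ : ℕ∞) (fun p : ℝ × ℝ × ℝ => fderiv ℝ (F f) p v) :=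
  (hf.fderiv_right (by simp)).clm_apply contDiff_const

theorem Sm.dx (hf : Sm f) : Sm (Dx f) := by
  have := Sm_apply_fderiv hf e1
  unfold Sm
  convert this using 2 with p
  exact Dx_eq hf p.1 p.2.1 p.2.2

theorem Sm.dy (hf : Sm f) : Sm (Dy f) := by
  have := Sm_apply_fderiv hf e2
  unfold Sm
  convert this using 2 with p
  exact Dy_eq hf p.1 p.2.1 p.2.2

theorem Sm.dz (hf : Sm f) : Sm (Dz f) := by
  have := Sm_apply_fderiv hf e3
  unfold Sm
  convert this using 2 with p
  exact Dz_eq hf p.1 p.2.1 p.2.2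

theorem fderiv_apply_const (hf : Sm f) (v w : ℝ × ℝ × ℝ) (p : ℝ × ℝ × ℝ) :
    fderiv ℝ (fun q => fderiv ℝ (F f) q v) p w = fderiv ℝ (fderiv ℝ (F f)) p w v := by
  have hc : DifferentiableAt ℝ (fderiv ℝ (F f)) p :=
    ((hf.fderiv_right (m := (⊤ : ℕ∞)) (by simp)).differentiable (by simp)) p
  rw [fderiv_clm_apply (𝕜 := ℝ) hc (differentiableAt_const v)]
  simp

theorem second_symm (hf : Sm f) (v w : ℝ × ℝ × ℝ) (p : ℝ × ℝ × ℝ) :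
    fderiv ℝ (fderiv ℝ (F f)) p v w = fderiv ℝ (fderiv ℝ (F f)) p w v :=
  (hf.contDiffAt.isSymmSndFDerivAt (by rw [minSmoothness_of_isRCLikeNormedField]; exact WithTop.coe_le_coe.mpr le_top)).eq v w

theorem Fg_eq (g : ℝ → ℝ → ℝ → ℝ) (v : ℝ × ℝ × ℝ)
    (hg : ∀ x y z, g x y z = fderiv ℝ (F f) (x, y, z) v) :
    F g = fun p => fderiv ℝ (F f) p v := by
  funext p; exact hg p.1 p.2.1 p.2.2

theorem Dy_Dx_comm (hf : Sm f) (x y z : ℝ) : Dy (Dx f) x y z = Dx (Dy f) x y z := by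
  rw [Dy_eq hf.dx, Dx_eq hf.dy,
    Fg_eq (f := f) (Dx f) e1 (fun a b c => Dx_eq hf a b c),
    Fg_eq (f := f) (Dy f) e2 (fun a b c => Dy_eq hf a b c),
    fderiv_apply_const hf e1 e2, fderiv_apply_const hf e2 e1, second_symm hf]

theorem Dz_Dx_comm (hf : Sm f) (x y z : ℝ) : Dz (Dx f) x y z = Dx (Dz f) x y z := by
  rw [Dz_eq hf.dx, Dx_eq hf.dz,
    Fg_eq (f := f) (Dx f) e1 (fun a b c => Dx_eq hf a b c),
    Fg_eq (f := f) (Dz f) e3 (fun a b c => Dz_eq hf a b c),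
    fderiv_apply_const hf e1 e3, fderiv_apply_const hf e3 e1, second_symm hf]

theorem Dz_Dy_comm (hf : Sm f) (x y z : ℝ) : Dz (Dy f) x y z = Dy (Dz f) x y z := by
  rw [Dz_eq hf.dy, Dy_eq hf.dz,
    Fg_eq (f := f) (Dy f) e2 (fun a b c => Dy_eq hf a b c),
    Fg_eq (f := f) (Dz f) e3 (fun a b c => Dz_eq hf a b c),
    fderiv_apply_const hf e2 e3, fderiv_apply_const hf e3 e2, second_symm hf]

end SGAux

open SGAux

/-- On simultaneous solutions of sine-Gordon `u_xy = sin u` and mKdV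
`u_z = u_xxx + (1/2)u_x³`, the 2-form `ℒ = L dx∧dy - M dz∧dx - N dy∧dz` is closed:
`∂_z L - ∂_y M - ∂_x N = 0`. -/
theorem stmt_4 (u : ℝ → ℝ → ℝ → ℝ)
    (hu : ContDiff ℝ (⊤ : ℕ∞) fun p : ℝ × ℝ × ℝ => u p.1 p.2.1 p.2.2)
    (L M N : ℝ → ℝ → ℝ → ℝ)
    (hL : ∀ x y z, L x y z = (1/2) * Dx u x y z * Dy u x y z - Real.cos (u x y z))
    (hM : ∀ x y z, M x y z = (1/2) * Dx u x y z * Dz u x y z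
          - (1/8) * (Dx u x y z)^4 + (1/2) * (Dx (Dx u) x y z)^2)
    (hN : ∀ x y z, N x y z = (1/2) * Dy u x y z * Dz u x y z
          - (1/2) * (Dx u x y z)^2 * Real.cos (u x y z)
          - Dx (Dx u) x y z * (Dy (Dx u) x y z - Real.sin (u x y z)))
    (hSG : ∀ x y z, Dy (Dx u) x y z = Real.sin (u x y z))
    (hmKdV : ∀ x y z, Dz u x y z = Dx (Dx (Dx u)) x y z + (1/2) * (Dx u x y z)^3) :
    ∀ x y z, Dz L x y z - Dy M x y z - Dx N x y z = 0 := by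
  have hu' : Sm u := hu
  -- C : Dy u_xx = cos u * u_x
  have hC : ∀ x y z, Dy (Dx (Dx u)) x y z = Real.cos (u x y z) * Dx u x y z := by
    intro x y z
    rw [Dy_Dx_comm hu'.dx]
    show deriv (fun s => Dy (Dx u) s y z) x = _
    have hfun : (fun s => Dy (Dx u) s y z) = fun s => Real.sin (u s y z) :=
      funext fun s => hSG s y z
    rw [hfun]
    exact ((hx hu' x y z).sin).deriv
  -- D : Dy u_xxx = -sin u * u_x^2 + cos u * u_xx
  have hD : ∀ x y z, Dy (Dx (Dx (Dx u))) x y z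
      = -Real.sin (u x y z) * (Dx u x y z)^2 + Real.cos (u x y z) * Dx (Dx u) x y z := by
    intro x y z
    rw [Dy_Dx_comm hu'.dx.dx]
    show deriv (fun s => Dy (Dx (Dx u)) s y z) x = _
    have hfun : (fun s => Dy (Dx (Dx u)) s y z)
        = fun s => Real.cos (u s y z) * Dx u s y z := funext fun s => hC s y z
    rw [hfun]; refine ((hx hu' x y z).cos.mul (hx hu'.dx x y z)).deriv.trans ?_
    ring
  -- E : Dx (Dz u) = u_xxxx + (3/2) u_x^2 u_xx
  have hE : ∀ x y z, Dx (Dz u) x y z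
      = Dx (Dx (Dx (Dx u))) x y z + (3/2) * (Dx u x y z)^2 * Dx (Dx u) x y z := by
    intro x y z
    show deriv (fun s => Dz u s y z) x = _
    have hfun : (fun s => Dz u s y z)
        = fun s => Dx (Dx (Dx u)) s y z + (1/2) * (Dx u s y z)^3 :=
      funext fun s => hmKdV s y z
    rw [hfun]; refine ((hx hu'.dx.dx.dx x y z).add
      (((hx hu'.dx x y z).pow 3).const_mul (1/2))).deriv.trans ?_
    push_cast
    ring
  -- F : Dy (Dz u) = (1/2) u_x^2 sin u + cos u * u_xx
  have hF : ∀ x y z, Dy (Dz u) x y z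
      = (1/2) * (Dx u x y z)^2 * Real.sin (u x y z)
        + Real.cos (u x y z) * Dx (Dx u) x y z := by
    intro x y z
    show deriv (fun t => Dz u x t z) y = _
    have hfun : (fun t => Dz u x t z)
        = fun t => Dx (Dx (Dx u)) x t z + (1/2) * (Dx u x t z)^3 :=
      funext fun t => hmKdV x t z
    rw [hfun]; refine ((hy hu'.dx.dx.dx x y z).add
      (((hy hu'.dx x y z).pow 3).const_mul (1/2))).deriv.trans ?_; rw [hD, hSG]
    push_cast
    ring
  intro x y z
  -- Dz L
  have hDzL : Dz L x y z
      = (1/2) * Dz (Dx u) x y z * Dy u x y z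
        + (1/2) * Dx u x y z * Dz (Dy u) x y z
        + Real.sin (u x y z) * Dz u x y z := by
    show deriv (fun t => L x y t) z = _
    have hfun : (fun t => L x y t)
        = fun t => (1/2) * Dx u x y t * Dy u x y t - Real.cos (u x y t) :=
      funext fun t => hL x y t
    rw [hfun]; refine ((((hz hu'.dx x y z).const_mul (1/2)).mul (hz hu'.dy x y z)).sub
      ((hz hu' x y z).cos)).deriv.trans ?_
    ring
  -- Dy M
  have hDyM : Dy M x y z
      = (1/2) * Real.sin (u x y z) * Dz u x y z
        + (1/2) * Dx u x y z * Dy (Dz u) x y z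
        - (1/2) * (Dx u x y z)^3 * Real.sin (u x y z)
        + Dx (Dx u) x y z * Dy (Dx (Dx u)) x y z := by
    show deriv (fun t => M x t z) y = _
    have hfun : (fun t => M x t z)
        = fun t => (1/2) * Dx u x t z * Dz u x t z
            - (1/8) * (Dx u x t z)^4 + (1/2) * (Dx (Dx u) x t z)^2 :=
      funext fun t => hM x t z
    rw [hfun]; refine (((((hy hu'.dx x y z).const_mul (1/2)).mul (hy hu'.dz x y z)).sub
      (((hy hu'.dx x y z).pow 4).const_mul (1/8))).add
      (((hy hu'.dx.dx x y z).pow 2).const_mul (1/2))).deriv.trans ?_; rw [hSG]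
    push_cast
    ring
  -- Dx N
  have hDxN : Dx N x y z
      = (1/2) * Real.sin (u x y z) * Dz u x y z
        + (1/2) * Dy u x y z * Dx (Dz u) x y z
        - Dx u x y z * Dx (Dx u) x y z * Real.cos (u x y z)
        + (1/2) * (Dx u x y z)^3 * Real.sin (u x y z) := by
    show deriv (fun s => N s y z) x = _
    have hfun : (fun s => N s y z)
        = fun s => (1/2) * Dy u s y z * Dz u s y z
            - (1/2) * (Dx u s y z)^2 * Real.cos (u s y z) := by
      funext s
      rw [hN, hSG]
      ring
    rw [hfun]; refine ((((hx hu'.dy x y z).const_mul (1/2)).mul (hx hu'.dz x y z)).sub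
      ((((hx hu'.dx x y z).pow 2).const_mul (1/2)).mul ((hx hu' x y z).cos))).deriv.trans ?_
    rw [← Dy_Dx_comm hu', hSG]
    simp only [Pi.pow_apply]
    push_cast
    ring
  rw [hDzL, hDyM, hDxN, Dz_Dx_comm hu', Dz_Dy_comm hu', hE, hF, hC, hmKdV]
  ring
end

section
/- Let u : ℝ³ → ℝ be smooth with variables x, y, z. Define M[u] = (1/2)u_x u_z − (1/8)u_x⁴ + (1/2)u_xx² and N[u] = (1/2)u_y u_z − (1/2)u_x² cos u − u_xx(u_xy − sin u). Define δN/δu_y := ∂N/∂u_y − D_y(∂N/∂u_yy) − D_z(∂N/∂u_yz) and δM/δu_x := ∂M/∂u_x − D_z(∂M/∂u_xz) − D_x(∂M/∂u_xx). Then δN/δu_y + δM/δu_x = u_z − (1/2)u_x³ − u_xxx. In particular, the multi-time Euler–Lagrange equation δN/δu_y + δM/δu_x = 0 is precisely the modified KdV equation u_z = u_xxx + (1/2)u_x³. -/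
/-- `M` as a function of the jet variables `(u, u_x, u_z, u_xx, u_xz)`. -/
noncomputable def Mjet (v vx vz vxx vxz : ℝ) : ℝ :=
  (1/2) * vx * vz - (1/8) * vx^4 + (1/2) * vxx^2

/-- `N` as a function of the jet variables `(u, u_x, u_y, u_z, u_xx, u_xy, u_yy, u_yz)`. -/
noncomputable def Njet (v vx vy vz vxx vxy vyy vyz : ℝ) : ℝ :=
  (1/2) * vy * vz - (1/2) * vx^2 * Real.cos v - vxx * (vxy - Real.sin v)

lemma dN_y (v vx vy vz vxx vxy vyy vyz : ℝ) :
    deriv (fun w => Njet v vx w vz vxx vxy vyy vyz) vy = (1/2) * vz := by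
  have h : HasDerivAt (fun w => Njet v vx w vz vxx vxy vyy vyz) ((1/2)*vz) vy := by
    have h1 : HasDerivAt (fun w : ℝ => ((1/2)*vz)*w) ((1/2)*vz) vy := by
      simpa using (hasDerivAt_id vy).const_mul ((1/2)*vz)
    have h2 := (h1.sub_const ((1/2)*vx^2*Real.cos v + vxx*(vxy - Real.sin v)))
    refine h2.congr_of_eventuallyEq (Filter.Eventually.of_forall fun w => ?_)
    simp [Njet]; ring
  exact h.deriv

lemma dN_yy (v vx vy vz vxx vxy vyy vyz : ℝ) :
    deriv (fun w => Njet v vx vy vz vxx vxy w vyz) vyy = 0 := by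
  simp [Njet]

lemma dN_yz (v vx vy vz vxx vxy vyy vyz : ℝ) :
    deriv (fun w => Njet v vx vy vz vxx vxy vyy w) vyz = 0 := by
  simp [Njet]

lemma dM_x (v vx vz vxx vxz : ℝ) :
    deriv (fun w => Mjet v w vz vxx vxz) vx = (1/2)*vz - (1/2)*vx^3 := by
  have h : HasDerivAt (fun w => Mjet v w vz vxx vxz) ((1/2)*vz - (1/2)*vx^3) vx := by
    have h1 : HasDerivAt (fun w : ℝ => ((1/2)*vz)*w) ((1/2)*vz) vx := by
      simpa using (hasDerivAt_id vx).const_mul ((1/2)*vz)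
    have h2 : HasDerivAt (fun w : ℝ => (1/8)*w^4) ((1/8)*(4*vx^3)) vx :=
      (hasDerivAt_pow 4 vx).const_mul (1/8) |>.congr_deriv (by push_cast; ring)
    have h3 := (h1.sub h2).add_const ((1/2)*vxx^2)
    refine (h3.congr_deriv (by ring)).congr_of_eventuallyEq (Filter.Eventually.of_forall fun w => ?_)
    · simp [Mjet]; ring
  exact h.deriv

lemma dM_xz (v vx vz vxx vxz : ℝ) :
    deriv (fun w => Mjet v vx vz vxx w) vxz = 0 := by
  simp [Mjet]

lemma dM_xx (v vx vz vxx vxz : ℝ) :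
    deriv (fun w => Mjet v vx vz w vxz) vxx = vxx := by
  have h : HasDerivAt (fun w => Mjet v vx vz w vxz) vxx vxx := by
    have h2 : HasDerivAt (fun w : ℝ => (1/2)*w^2) vxx vxx :=
      ((hasDerivAt_pow 2 vxx).const_mul (1/2)).congr_deriv (by push_cast; ring)
    have h3 := h2.const_add ((1/2)*vx*vz - (1/8)*vx^4)
    refine h3.congr_of_eventuallyEq (Filter.Eventually.of_forall fun w => ?_)
    simp [Mjet]
  exact h.deriv

/-- The corner equation of the pluri-Lagrangian system:
`δN/δu_y + δM/δu_x = u_z - (1/2)u_x³ - u_xxx`, where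
`δN/δu_y := ∂N/∂u_y - D_y(∂N/∂u_yy) - D_z(∂N/∂u_yz)` and
`δM/δu_x := ∂M/∂u_x - D_z(∂M/∂u_xz) - D_x(∂M/∂u_xx)`.
In particular `δN/δu_y + δM/δu_x = 0` is precisely the mKdV equation
`u_z = u_xxx + (1/2)u_x³`. -/
theorem stmt_12 (u : ℝ → ℝ → ℝ → ℝ)
    (hu : ContDiff ℝ (⊤ : ℕ∞) fun p : ℝ × ℝ × ℝ => u p.1 p.2.1 p.2.2)
    (EN EM : ℝ → ℝ → ℝ → ℝ)
    (hEN : ∀ x y z, EN x y z =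
      deriv (fun w => Njet (u x y z) (Dx u x y z) w (Dz u x y z)
        (Dx (Dx u) x y z) (Dy (Dx u) x y z) (Dy (Dy u) x y z) (Dz (Dy u) x y z))
        (Dy u x y z)
      - Dy (fun a b c =>
          deriv (fun w => Njet (u a b c) (Dx u a b c) (Dy u a b c) (Dz u a b c)
            (Dx (Dx u) a b c) (Dy (Dx u) a b c) w (Dz (Dy u) a b c))
            (Dy (Dy u) a b c)) x y z
      - Dz (fun a b c =>
          deriv (fun w => Njet (u a b c) (Dx u a b c) (Dy u a b c) (Dz u a b c)
            (Dx (Dx u) a b c) (Dy (Dx u) a b c) (Dy (Dy u) a b c) w)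
            (Dz (Dy u) a b c)) x y z)
    (hEM : ∀ x y z, EM x y z =
      deriv (fun w => Mjet (u x y z) w (Dz u x y z) (Dx (Dx u) x y z)
        (Dz (Dx u) x y z)) (Dx u x y z)
      - Dz (fun a b c =>
          deriv (fun w => Mjet (u a b c) (Dx u a b c) (Dz u a b c)
            (Dx (Dx u) a b c) w) (Dz (Dx u) a b c)) x y z
      - Dx (fun a b c =>
          deriv (fun w => Mjet (u a b c) (Dx u a b c) (Dz u a b c) w
            (Dz (Dx u) a b c)) (Dx (Dx u) a b c)) x y z) :
    (∀ x y z, EN x y z + EM x y z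
      = Dz u x y z - (1/2) * (Dx u x y z)^3 - Dx (Dx (Dx u)) x y z) ∧
    ((∀ x y z, EN x y z + EM x y z = 0) ↔
      ∀ x y z, Dz u x y z = Dx (Dx (Dx u)) x y z + (1/2) * (Dx u x y z)^3) := by
  have key : ∀ x y z, EN x y z + EM x y z
      = Dz u x y z - (1/2) * (Dx u x y z)^3 - Dx (Dx (Dx u)) x y z := by
    intro x y z
    rw [hEN, hEM]
    simp only [dN_y, dN_yy, dN_yz, dM_x, dM_xz, dM_xx]
    simp only [Dx, Dy, Dz, deriv_const]
    ring
  refine ⟨key, ?_, ?_⟩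
  · intro h x y z
    have := h x y z
    rw [key x y z] at this
    linarith
  · intro h x y z
    rw [key x y z, h x y z]
    ring
end

section
/- Let u : ℝ³ → ℝ be smooth with variables x, y, z, and suppose u satisfies u_xy = sin u and u_z = u_xxx + (1/2)u_x³. Define M[u] = (1/2)u_x u_z − (1/8)u_x⁴ + (1/2)u_xx². Then the action of the y-flow on M is a total divergence in x and z: ∂_y M = ∂_z( (1/2)u_x u_y − cos u ) − ∂_x( (1/2)u_y u_z − (1/2)u_x² cos u − u_xx(u_xy − sin u) ). -/
noncomputable def pd (v : ℝ × ℝ × ℝ) (G : ℝ × ℝ × ℝ → ℝ) : ℝ × ℝ × ℝ → ℝ :=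
  fun p => fderiv ℝ G p v

lemma pd_contDiff {G : ℝ × ℝ × ℝ → ℝ} (hG : ContDiff ℝ (⊤ : ℕ∞) G) (v : ℝ × ℝ × ℝ) :
    ContDiff ℝ (⊤ : ℕ∞) (pd v G) :=
  (hG.fderiv_right (by simp)).clm_apply contDiff_const

lemma slice1 {G : ℝ × ℝ × ℝ → ℝ} (hG : ContDiff ℝ (⊤ : ℕ∞) G) (x y z : ℝ) :
    HasDerivAt (fun s => G (s, y, z)) (pd (1, 0, 0) G (x, y, z)) x := by
  have h : HasDerivAt (fun s : ℝ => ((s, y, z) : ℝ × ℝ × ℝ)) (1, 0, 0) x :=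
    (hasDerivAt_id x).prodMk (hasDerivAt_const x (y, z))
  exact (hG.differentiable (by simp) (x, y, z)).hasFDerivAt.comp_hasDerivAt x h

lemma slice2 {G : ℝ × ℝ × ℝ → ℝ} (hG : ContDiff ℝ (⊤ : ℕ∞) G) (x y z : ℝ) :
    HasDerivAt (fun t => G (x, t, z)) (pd (0, 1, 0) G (x, y, z)) y := by
  have h : HasDerivAt (fun t : ℝ => ((x, t, z) : ℝ × ℝ × ℝ)) (0, 1, 0) y :=
    (hasDerivAt_const y x).prodMk ((hasDerivAt_id y).prodMk (hasDerivAt_const y z))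
  exact (hG.differentiable (by simp) (x, y, z)).hasFDerivAt.comp_hasDerivAt y h

lemma slice3 {G : ℝ × ℝ × ℝ → ℝ} (hG : ContDiff ℝ (⊤ : ℕ∞) G) (x y z : ℝ) :
    HasDerivAt (fun t => G (x, y, t)) (pd (0, 0, 1) G (x, y, z)) z := by
  have h : HasDerivAt (fun t : ℝ => ((x, y, t) : ℝ × ℝ × ℝ)) (0, 0, 1) z :=
    (hasDerivAt_const z x).prodMk ((hasDerivAt_const z y).prodMk (hasDerivAt_id z))
  exact (hG.differentiable (by simp) (x, y, z)).hasFDerivAt.comp_hasDerivAt z h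

lemma pd_comm {G : ℝ × ℝ × ℝ → ℝ} (hG : ContDiff ℝ (⊤ : ℕ∞) G) (a b : ℝ × ℝ × ℝ) :
    pd a (pd b G) = pd b (pd a G) := by
  have key : ∀ (v w : ℝ × ℝ × ℝ) (p : ℝ × ℝ × ℝ),
      pd v (pd w G) p = fderiv ℝ (fderiv ℝ G) p v w := by
    intro v w p
    have hd : DifferentiableAt ℝ (fderiv ℝ G) p :=
      ((hG.fderiv_right (m := (⊤ : ℕ∞)) (by simp)).differentiable (by simp)) p
    show fderiv ℝ (fun q => fderiv ℝ G q w) p v = _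
    rw [fderiv_clm_apply hd (differentiableAt_const w)]
    simp
  funext p
  have hsym := (hG.contDiffAt (x := p)).isSymmSndFDerivAt (by rw [minSmoothness_of_isRCLikeNormedField]; exact WithTop.coe_le_coe.mpr (le_top : (2 : ℕ∞) ≤ ⊤))
  rw [key a b p, key b a p, hsym.eq]

/-- On simultaneous solutions of sine-Gordon `u_xy = sin u` and mKdV
`u_z = u_xxx + (1/2)u_x³`, the action of the `y`-flow on the mKdV Lagrangian
`M = (1/2)u_x u_z - (1/8)u_x⁴ + (1/2)u_xx²` is a total divergence in `x` and `z`: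
`∂_y M = ∂_z L - ∂_x N` with `L = (1/2)u_x u_y - cos u` and
`N = (1/2)u_y u_z - (1/2)u_x² cos u - u_xx(u_xy - sin u)`. -/
theorem stmt_15 (u : ℝ → ℝ → ℝ → ℝ)
    (hu : ContDiff ℝ (⊤ : ℕ∞) fun p : ℝ × ℝ × ℝ => u p.1 p.2.1 p.2.2)
    (hSG : ∀ x y z, Dy (Dx u) x y z = Real.sin (u x y z))
    (hmKdV : ∀ x y z, Dz u x y z = Dx (Dx (Dx u)) x y z + (1/2) * (Dx u x y z)^3)
    (L M N : ℝ → ℝ → ℝ → ℝ)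
    (hL : ∀ x y z, L x y z = (1/2) * Dx u x y z * Dy u x y z - Real.cos (u x y z))
    (hM : ∀ x y z, M x y z = (1/2) * Dx u x y z * Dz u x y z
          - (1/8) * (Dx u x y z)^4 + (1/2) * (Dx (Dx u) x y z)^2)
    (hN : ∀ x y z, N x y z = (1/2) * Dy u x y z * Dz u x y z
          - (1/2) * (Dx u x y z)^2 * Real.cos (u x y z)
          - Dx (Dx u) x y z * (Dy (Dx u) x y z - Real.sin (u x y z))) :
    ∀ x y z, Dy M x y z = Dz L x y z - Dx N x y z := by
  set F : ℝ × ℝ × ℝ → ℝ := fun p => u p.1 p.2.1 p.2.2 with hFdef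
  have hF : ContDiff ℝ (⊤ : ℕ∞) F := hu
  -- smoothness of iterated partials
  have hg1 : ContDiff ℝ (⊤ : ℕ∞) (pd (1,0,0) F) := pd_contDiff hF _
  have hg2 : ContDiff ℝ (⊤ : ℕ∞) (pd (0,1,0) F) := pd_contDiff hF _
  have hg3 : ContDiff ℝ (⊤ : ℕ∞) (pd (0,0,1) F) := pd_contDiff hF _
  have hg11 : ContDiff ℝ (⊤ : ℕ∞) (pd (1,0,0) (pd (1,0,0) F)) := pd_contDiff hg1 _
  have hg12 : ContDiff ℝ (⊤ : ℕ∞) (pd (0,1,0) (pd (1,0,0) F)) := pd_contDiff hg1 _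
  have hg111 : ContDiff ℝ (⊤ : ℕ∞) (pd (1,0,0) (pd (1,0,0) (pd (1,0,0) F))) := pd_contDiff hg11 _
  have hg112 : ContDiff ℝ (⊤ : ℕ∞) (pd (1,0,0) (pd (0,1,0) (pd (1,0,0) F))) := pd_contDiff hg12 _
  -- translation of Dx, Dy, Dz into pd
  have hDx : ∀ a b c, Dx u a b c = pd (1,0,0) F (a,b,c) := fun a b c => (slice1 hF a b c).deriv
  have hDy : ∀ a b c, Dy u a b c = pd (0,1,0) F (a,b,c) := fun a b c => (slice2 hF a b c).deriv
  have hDz : ∀ a b c, Dz u a b c = pd (0,0,1) F (a,b,c) := fun a b c => (slice3 hF a b c).deriv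
  have hDxx : ∀ a b c, Dx (Dx u) a b c = pd (1,0,0) (pd (1,0,0) F) (a,b,c) := by
    intro a b c
    show deriv (fun s => Dx u s b c) a = _
    have he : (fun s => Dx u s b c) = fun s => pd (1,0,0) F (s,b,c) :=
      funext fun s => hDx s b c
    rw [he]; exact (slice1 hg1 a b c).deriv
  have hDxy : ∀ a b c, Dy (Dx u) a b c = pd (0,1,0) (pd (1,0,0) F) (a,b,c) := by
    intro a b c
    show deriv (fun t => Dx u a t c) b = _
    have he : (fun t => Dx u a t c) = fun t => pd (1,0,0) F (a,t,c) :=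
      funext fun t => hDx a t c
    rw [he]; exact (slice2 hg1 a b c).deriv
  have hDxxx : ∀ a b c, Dx (Dx (Dx u)) a b c = pd (1,0,0) (pd (1,0,0) (pd (1,0,0) F)) (a,b,c) := by
    intro a b c
    show deriv (fun s => Dx (Dx u) s b c) a = _
    have he : (fun s => Dx (Dx u) s b c) = fun s => pd (1,0,0) (pd (1,0,0) F) (s,b,c) :=
      funext fun s => hDxx s b c
    rw [he]; exact (slice1 hg11 a b c).deriv
  -- the PDEs as identities of functions of p
  have hSG' : pd (0,1,0) (pd (1,0,0) F) = fun p => Real.sin (F p) := by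
    funext p
    have h := hSG p.1 p.2.1 p.2.2
    rw [hDxy] at h
    exact h
  have hmK' : pd (0,0,1) F = fun p => pd (1,0,0) (pd (1,0,0) (pd (1,0,0) F)) p
      + (1/2) * (pd (1,0,0) F p)^3 := by
    funext p
    have h := hmKdV p.1 p.2.1 p.2.2
    rw [hDz, hDxxx, hDx] at h
    exact h
  -- key mixed-derivative facts
  have hsinF : ContDiff ℝ (⊤ : ℕ∞) (fun p => Real.sin (F p)) := Real.contDiff_sin.comp hF
  have e112 : ∀ p : ℝ × ℝ × ℝ, pd (1,0,0) (pd (0,1,0) (pd (1,0,0) F)) p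
      = Real.cos (F p) * pd (1,0,0) F p := by
    rintro ⟨a, b, c⟩
    rw [hSG']
    have hs : HasDerivAt (fun s => Real.sin (F (s,b,c)))
        (Real.cos (F (a,b,c)) * pd (1,0,0) F (a,b,c)) a :=
      (slice1 hF a b c).sin
    exact (slice1 hsinF a b c).unique hs
  have h112fun : pd (1,0,0) (pd (0,1,0) (pd (1,0,0) F))
      = fun p => Real.cos (F p) * pd (1,0,0) F p := funext e112
  have h112smooth : ContDiff ℝ (⊤ : ℕ∞) (fun p => Real.cos (F p) * pd (1,0,0) F p) :=
    (Real.contDiff_cos.comp hF).mul hg1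
  have e1112 : ∀ p : ℝ × ℝ × ℝ, pd (1,0,0) (pd (1,0,0) (pd (0,1,0) (pd (1,0,0) F))) p
      = -Real.sin (F p) * pd (1,0,0) F p * pd (1,0,0) F p
        + Real.cos (F p) * pd (1,0,0) (pd (1,0,0) F) p := by
    rintro ⟨a, b, c⟩
    rw [h112fun]
    have hc : HasDerivAt (fun s => Real.cos (F (s,b,c)))
        (-Real.sin (F (a,b,c)) * pd (1,0,0) F (a,b,c)) a :=
      (slice1 hF a b c).cos
    have hm := hc.mul (slice1 hg1 a b c)
    exact (slice1 h112smooth a b c).unique hm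
  -- commutation facts
  have c12 : pd (1,0,0) (pd (0,1,0) F) = pd (0,1,0) (pd (1,0,0) F) := pd_comm hF _ _
  have c13 : pd (1,0,0) (pd (0,0,1) F) = pd (0,0,1) (pd (1,0,0) F) := pd_comm hF _ _
  have c23 : pd (0,0,1) (pd (0,1,0) F) = pd (0,1,0) (pd (0,0,1) F) := pd_comm hF _ _
  have cD : pd (0,1,0) (pd (1,0,0) (pd (1,0,0) F))
      = pd (1,0,0) (pd (0,1,0) (pd (1,0,0) F)) := pd_comm hg1 _ _
  have cE : pd (0,1,0) (pd (1,0,0) (pd (1,0,0) (pd (1,0,0) F)))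
      = pd (1,0,0) (pd (0,1,0) (pd (1,0,0) (pd (1,0,0) F))) := pd_comm hg11 _ _
  -- ∂_y of u_xxx expressed via e1112
  have e2_111 : ∀ p : ℝ × ℝ × ℝ, pd (0,1,0) (pd (1,0,0) (pd (1,0,0) (pd (1,0,0) F))) p
      = pd (1,0,0) (pd (1,0,0) (pd (0,1,0) (pd (1,0,0) F))) p := by
    intro p
    rw [cE, cD]
  -- ∂_y of u_z
  have hsum : ContDiff ℝ (⊤ : ℕ∞) (fun p => pd (1,0,0) (pd (1,0,0) (pd (1,0,0) F)) p
      + (1/2) * (pd (1,0,0) F p)^3) :=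
    hg111.add (contDiff_const.mul (hg1.pow 3))
  have e2_3 : ∀ a b c : ℝ, pd (0,1,0) (pd (0,0,1) F) (a,b,c)
      = pd (0,1,0) (pd (1,0,0) (pd (1,0,0) (pd (1,0,0) F))) (a,b,c)
        + (3/2) * (pd (1,0,0) F (a,b,c))^2 * pd (0,1,0) (pd (1,0,0) F) (a,b,c) := by
    intro a b c
    rw [hmK']
    have hD := (slice2 hg111 a b c).add
      (((slice2 hg1 a b c).pow 3).const_mul ((1:ℝ)/2))
    have h := (slice2 hsum a b c).unique hD
    rw [h]; push_cast; ring
  intro x y z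
  -- derivative of M in y
  have hMfun : (fun t => M x t z) = fun t => (1/2) * pd (1,0,0) F (x,t,z) * pd (0,0,1) F (x,t,z)
      - (1/8) * (pd (1,0,0) F (x,t,z))^4 + (1/2) * (pd (1,0,0) (pd (1,0,0) F) (x,t,z))^2 := by
    funext t
    rw [hM, hDx, hDz, hDxx]
  have HDM : HasDerivAt (fun t => M x t z)
      ((1/2) * pd (0,1,0) (pd (1,0,0) F) (x,y,z) * pd (0,0,1) F (x,y,z)
        + (1/2) * pd (1,0,0) F (x,y,z) * pd (0,1,0) (pd (0,0,1) F) (x,y,z)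
        - (1/2) * (pd (1,0,0) F (x,y,z))^3 * pd (0,1,0) (pd (1,0,0) F) (x,y,z)
        + pd (1,0,0) (pd (1,0,0) F) (x,y,z) * pd (0,1,0) (pd (1,0,0) (pd (1,0,0) F)) (x,y,z)) y := by
    rw [hMfun]
    have h1 := slice2 hg1 x y z
    have h3 := slice2 hg3 x y z
    have h11 := slice2 hg11 x y z
    convert! (((h1.const_mul ((1:ℝ)/2)).mul h3).sub
      ((h1.fun_pow 4).const_mul ((1:ℝ)/8))).add ((h11.fun_pow 2).const_mul ((1:ℝ)/2)) using 1
    push_cast; ring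
  -- derivative of L in z
  have hLfun : (fun t => L x y t) = fun t => (1/2) * pd (1,0,0) F (x,y,t) * pd (0,1,0) F (x,y,t)
      - Real.cos (F (x,y,t)) := by
    funext t
    rw [hL, hDx, hDy]
  have HDL : HasDerivAt (fun t => L x y t)
      ((1/2) * pd (0,0,1) (pd (1,0,0) F) (x,y,z) * pd (0,1,0) F (x,y,z)
        + (1/2) * pd (1,0,0) F (x,y,z) * pd (0,0,1) (pd (0,1,0) F) (x,y,z)
        + Real.sin (F (x,y,z)) * pd (0,0,1) F (x,y,z)) z := by
    rw [hLfun]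
    have k1 := slice3 hg1 x y z
    have k2 := slice3 hg2 x y z
    have kc : HasDerivAt (fun t => Real.cos (F (x,y,t)))
        (-Real.sin (F (x,y,z)) * pd (0,0,1) F (x,y,z)) z :=
      HasDerivAt.comp z (Real.hasDerivAt_cos (F (x,y,z))) (slice3 hF x y z)
    convert! ((k1.const_mul ((1:ℝ)/2)).mul k2).sub kc using 1
    ring
  -- derivative of N in x
  have hNfun : (fun s => N s y z) = fun s => (1/2) * pd (0,1,0) F (s,y,z) * pd (0,0,1) F (s,y,z)
      - (1/2) * (pd (1,0,0) F (s,y,z))^2 * Real.cos (F (s,y,z))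
      - pd (1,0,0) (pd (1,0,0) F) (s,y,z)
        * (pd (0,1,0) (pd (1,0,0) F) (s,y,z) - Real.sin (F (s,y,z))) := by
    funext s
    rw [hN, hDy, hDz, hDx, hDxx, hDxy]
  have HDN : HasDerivAt (fun s => N s y z)
      ((1/2) * pd (1,0,0) (pd (0,1,0) F) (x,y,z) * pd (0,0,1) F (x,y,z)
        + (1/2) * pd (0,1,0) F (x,y,z) * pd (1,0,0) (pd (0,0,1) F) (x,y,z)
        - pd (1,0,0) F (x,y,z) * pd (1,0,0) (pd (1,0,0) F) (x,y,z) * Real.cos (F (x,y,z))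
        + (1/2) * (pd (1,0,0) F (x,y,z))^3 * Real.sin (F (x,y,z))
        - pd (1,0,0) (pd (1,0,0) (pd (1,0,0) F)) (x,y,z)
          * (pd (0,1,0) (pd (1,0,0) F) (x,y,z) - Real.sin (F (x,y,z)))
        - pd (1,0,0) (pd (1,0,0) F) (x,y,z)
          * (pd (1,0,0) (pd (0,1,0) (pd (1,0,0) F)) (x,y,z)
            - Real.cos (F (x,y,z)) * pd (1,0,0) F (x,y,z))) x := by
    rw [hNfun]
    have m1 := slice1 hg1 x y z
    have m2 := slice1 hg2 x y z
    have m3 := slice1 hg3 x y z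
    have m11 := slice1 hg11 x y z
    have m12 := slice1 hg12 x y z
    have mc : HasDerivAt (fun s => Real.cos (F (s,y,z)))
        (-Real.sin (F (x,y,z)) * pd (1,0,0) F (x,y,z)) x :=
      (slice1 hF x y z).cos
    have ms : HasDerivAt (fun s => Real.sin (F (s,y,z)))
        (Real.cos (F (x,y,z)) * pd (1,0,0) F (x,y,z)) x :=
      (slice1 hF x y z).sin
    convert! ((((m2.const_mul ((1:ℝ)/2)).mul m3).sub
      (((m1.fun_pow 2).const_mul ((1:ℝ)/2)).mul mc)).sub
      (m11.mul (m12.fun_sub ms))) using 1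
    push_cast; ring
  show deriv (fun t => M x t z) y = deriv (fun t => L x y t) z - deriv (fun s => N s y z) x
  rw [HDM.deriv, HDL.deriv, HDN.deriv]
  -- now pure algebra after substituting the identities
  have s12 : pd (0,1,0) (pd (1,0,0) F) (x,y,z) = Real.sin (F (x,y,z)) := by rw [hSG']
  have s211 : pd (0,1,0) (pd (1,0,0) (pd (1,0,0) F)) (x,y,z)
      = Real.cos (F (x,y,z)) * pd (1,0,0) F (x,y,z) := by
    rw [cD]; exact e112 _
  have s23 : pd (0,0,1) (pd (0,1,0) F) (x,y,z) = pd (0,1,0) (pd (0,0,1) F) (x,y,z) := by rw [c23]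
  have s21 : pd (1,0,0) (pd (0,1,0) F) (x,y,z) = pd (0,1,0) (pd (1,0,0) F) (x,y,z) := by rw [c12]
  have s31 : pd (1,0,0) (pd (0,0,1) F) (x,y,z) = pd (0,0,1) (pd (1,0,0) F) (x,y,z) := by rw [c13]
  have sA := e112 (x,y,z)
  have sB := e2_3 x y z
  have sC : pd (0,1,0) (pd (1,0,0) (pd (1,0,0) (pd (1,0,0) F))) (x,y,z)
      = -Real.sin (F (x,y,z)) * pd (1,0,0) F (x,y,z) * pd (1,0,0) F (x,y,z)
        + Real.cos (F (x,y,z)) * pd (1,0,0) (pd (1,0,0) F) (x,y,z) := by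
    rw [e2_111]; exact e1112 _
  rw [s12, s211, s23, s21, s31, sA, sB, sC, s12]
  ring
end
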